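/- Let I be a nonzero homogeneous ideal of the standard graded polynomial ring S = k[x_1,…,x_n] and set p = pd(S/I). Then T_p(S/I) ≤ T_{p−1}(S/I) + t_1(S/I), where t_1(S/I) is the minimal degree of a minimal generator of I. -/

import Mathlib

open MvPolynomial

/-- The degree-`d` homogeneous piece of the standard graded polynomial ring
`S = k[x_1,…,x_n]` (each variable of degree one), with pieces indexed by `ℤ`
(zero in negative degrees). -/
noncomputable def polyPiece (k : Type) [Field k] (n : ℕ) (d : ℤ) :
    Submodule k (MvPolynomial (Fin n) k) :=
  if 0 ≤ d then MvPolynomial.homogeneousSubmodule (Fin n) k d.toNat else ⊥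

/-- The irrelevant maximal ideal `(x_1,…,x_n)` of `S = k[x_1,…,x_n]`. -/
noncomputable def maxIdeal (k : Type) [Field k] (n : ℕ) : Ideal (MvPolynomial (Fin n) k) :=
  Ideal.span (Set.range MvPolynomial.X)

/-- The degree-`d` piece of the graded free module `⊕_{t : ι} S(-dg t)`,
realized concretely as `ι →₀ S`. -/
noncomputable def freePiece (k : Type) [Field k] (n : ℕ) {ι : Type} (dg : ι → ℤ) (d : ℤ) :
    Submodule k (ι →₀ MvPolynomial (Fin n) k) :=
  ⨅ t : ι, (polyPiece k n (d - dg t)).comap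
    ((Finsupp.lapply t : (ι →₀ MvPolynomial (Fin n) k) →ₗ[MvPolynomial (Fin n) k]
        MvPolynomial (Fin n) k).restrictScalars k)

/-- `piece` is a grading on the `S`-module `M`, making `M` a graded `S`-module. -/
structure IsGrading (k : Type) [Field k] (n : ℕ) (M : Type) [AddCommGroup M]
    [Module (MvPolynomial (Fin n) k) M] [Module k M]
    [IsScalarTower k (MvPolynomial (Fin n) k) M]
    (piece : ℤ → Submodule k M) : Prop where
  internal : DirectSum.IsInternal piece
  smul_mem : ∀ (i : ℕ) (d : ℤ) ⦃s : MvPolynomial (Fin n) k⦄,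
      s ∈ MvPolynomial.homogeneousSubmodule (Fin n) k i →
      ∀ ⦃m : M⦄, m ∈ piece d → s • m ∈ piece ((i : ℤ) + d)

/-- A minimal graded free resolution `⋯ → F_1 → F_0 → M → 0` of the graded
`S`-module `M` (with grading `piece`), where `F_i = ⊕_{t : ι i} S(-dg i t)` is
realized as `ι i →₀ S`.  All the `ι i` are finite, so `M` is finitely generated. -/
structure MinFreeRes (k : Type) [Field k] (n : ℕ) (M : Type) [AddCommGroup M]
    [Module (MvPolynomial (Fin n) k) M] [Module k M]
    [IsScalarTower k (MvPolynomial (Fin n) k) M]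
    (piece : ℤ → Submodule k M) where
  ι : ℕ → Type
  fin : ∀ i, Fintype (ι i)
  dg : ∀ i, ι i → ℤ
  diff : ∀ i, (ι (i + 1) →₀ MvPolynomial (Fin n) k) →ₗ[MvPolynomial (Fin n) k]
      (ι i →₀ MvPolynomial (Fin n) k)
  aug : (ι 0 →₀ MvPolynomial (Fin n) k) →ₗ[MvPolynomial (Fin n) k] M
  aug_surjective : Function.Surjective aug
  ker_aug : LinearMap.ker aug = LinearMap.range (diff 0)
  exact : ∀ i, LinearMap.ker (diff i) = LinearMap.range (diff (i + 1))
  diff_graded : ∀ i (d : ℤ) x, x ∈ freePiece k n (dg (i + 1)) d →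
      diff i x ∈ freePiece k n (dg i) d
  aug_graded : ∀ (d : ℤ) x, x ∈ freePiece k n (dg 0) d → aug x ∈ piece d
  minimal : ∀ i, LinearMap.range (diff i) ≤
      maxIdeal k n • (⊤ : Submodule (MvPolynomial (Fin n) k)
        (ι i →₀ MvPolynomial (Fin n) k))

namespace MinFreeRes

variable {k : Type} [Field k] {n : ℕ} {M : Type} [AddCommGroup M]
  [Module (MvPolynomial (Fin n) k) M] [Module k M]
  [IsScalarTower k (MvPolynomial (Fin n) k) M] {piece : ℤ → Submodule k M}

/-- The resolution has length exactly `p`; equivalently, `pd_S M = p`. -/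
def lengthEq (R : MinFreeRes k n M piece) (p : ℕ) : Prop :=
  Nonempty (R.ι p) ∧ ∀ i, p < i → IsEmpty (R.ι i)

/-- The `i`-th maximal graded shift `T_i(M)`: the largest degree of a generator of
the `i`-th term of the minimal graded free resolution of `M` (equivalently, the top
degree of `Tor_i^S(M,k)`), and `⊥` if that term vanishes. -/
noncomputable def T (R : MinFreeRes k n M piece) (i : ℕ) : WithBot ℤ :=
  letI := R.fin i
  (Finset.univ : Finset (R.ι i)).sup fun t => ((R.dg i t : ℤ) : WithBot ℤ)

/-- The Castelnuovo–Mumford regularity `reg M = max_{0 ≤ i ≤ p} (T_i(M) - i)`,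
where `p = pd M`. -/
noncomputable def reg (R : MinFreeRes k n M piece) (p : ℕ) : WithBot ℤ :=
  (Finset.range (p + 1)).sup fun i => R.T i + ((-(i : ℤ) : ℤ) : WithBot ℤ)

end MinFreeRes

/-- The canonical degree-`d` graded piece of `S/I`. -/
noncomputable def quotPiece (k : Type) [Field k] (n : ℕ) (I : Ideal (MvPolynomial (Fin n) k))
    (d : ℤ) : Submodule k (MvPolynomial (Fin n) k ⧸ I) :=
  (polyPiece k n d).map (Ideal.Quotient.mkₐ k I).toLinearMap

/-- `I` is a homogeneous ideal of `S = k[x_1,…,x_n]` for the standard grading. -/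
def IsHomogeneousIdeal (k : Type) [Field k] (n : ℕ)
    (I : Ideal (MvPolynomial (Fin n) k)) : Prop :=
  ∀ f ∈ I, ∀ d : ℕ, MvPolynomial.homogeneousComponent d f ∈ I

/-- The depth of `M` (w.r.t. the homogeneous maximal ideal): the supremum of the
lengths of `M`-regular sequences contained in `(x_1,…,x_n)`. -/
noncomputable def moduleDepth (k : Type) [Field k] (n : ℕ) (M : Type) [AddCommGroup M]
    [Module (MvPolynomial (Fin n) k) M] : ℕ∞ :=
  sSup {r : ℕ∞ | ∃ L : List (MvPolynomial (Fin n) k), (L.length : ℕ∞) = r ∧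
    (∀ f ∈ L, f ∈ maxIdeal k n) ∧ RingTheory.Sequence.IsRegular M L}

/-- The Krull dimension of the module `M`, i.e. `dim (S / ann M)`. -/
noncomputable def moduleDim (k : Type) [Field k] (n : ℕ) (M : Type) [AddCommGroup M]
    [Module (MvPolynomial (Fin n) k) M] : WithBot ℕ∞ :=
  ringKrullDim (MvPolynomial (Fin n) k ⧸ Module.annihilator (MvPolynomial (Fin n) k) M)

/-!
Choose `u ∈ F₁` of degree `t₁`. Since `S/I` is cyclic and the resolution is minimal, `F₀ = S`,
so `d₁(e_u)` is a nonzero form `f ∈ I` of degree at most `t₁`. Multiplication by `f` kills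
`S/I`, hence it is null-homotopic on the resolution through a homotopy `σ` of degree `deg f`,
built step by step because graded free modules are graded-projective. As `F_{p+1} = 0`, the
homotopy gives `σ ∘ d_p = f` on `F_p`. If a basis vector `e_u` of `F_p` had degree
`> T_{p-1} + t₁`, then every `σ(e_s)`, `e_s` a basis vector of `F_{p-1}`, would have degree
`< deg e_u`, so the `u`-coordinate of `σ(d_p e_u) = f e_u` would vanish, contradicting `f ≠ 0`.
-/

open Finsupp

variable {k : Type} [Field k] {n : ℕ}

local notation "S" => MvPolynomial (Fin n) k

section Grading

lemma polyPiece_of_neg {d : ℤ} (hd : d < 0) : polyPiece k n d = ⊥ := by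
  simp [polyPiece, not_le.2 hd]

lemma mem_polyPiece_of_nonneg {d : ℤ} (hd : 0 ≤ d) {f : S} :
    f ∈ polyPiece k n d ↔ f.IsHomogeneous d.toNat := by
  simp [polyPiece, hd, mem_homogeneousSubmodule]

lemma mul_mem_polyPiece {a b : ℤ} {f g : S} (hf : f ∈ polyPiece k n a)
    (hg : g ∈ polyPiece k n b) : f * g ∈ polyPiece k n (a + b) := by
  rcases lt_or_ge a 0 with ha | ha
  · simp_all [polyPiece_of_neg ha]
  rcases lt_or_ge b 0 with hb | hb
  · simp_all [polyPiece_of_neg hb]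
  rw [mem_polyPiece_of_nonneg ha] at hf
  rw [mem_polyPiece_of_nonneg hb] at hg
  rw [mem_polyPiece_of_nonneg (by omega), show (a + b).toNat = a.toNat + b.toNat by omega]
  exact hf.mul hg

lemma monomial_mem_polyPiece (m : Fin n →₀ ℕ) (a : k) :
    monomial m a ∈ polyPiece k n (m.degree : ℤ) := by
  simpa [mem_polyPiece_of_nonneg] using isHomogeneous_monomial a rfl

noncomputable def polyComponent (d : ℤ) : S →ₗ[k] S :=
  if 0 ≤ d then homogeneousComponent d.toNat else 0

lemma polyComponent_mem (d : ℤ) (f : S) : polyComponent d f ∈ polyPiece k n d := by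
  by_cases hd : 0 ≤ d
  · simpa [polyComponent, hd, mem_polyPiece_of_nonneg hd]
      using homogeneousComponent_isHomogeneous d.toNat f
  · simp [polyComponent, hd]

lemma polyComponent_of_mem {d : ℤ} {f : S} (hf : f ∈ polyPiece k n d) (d' : ℤ) :
    polyComponent d' f = if d = d' then f else 0 := by
  rcases lt_or_ge d 0 with hd | hd
  · simp_all [polyPiece_of_neg hd]
  rw [mem_polyPiece_of_nonneg hd, ← mem_homogeneousSubmodule] at hf
  by_cases hd' : 0 ≤ d'
  · simp only [polyComponent, hd', if_true, homogeneousComponent_of_mem hf]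
    congr 1
    apply propext
    omega
  · simp [polyComponent, hd']
    omega

variable {ι κ ν : Type}

lemma mem_freePiece_iff {dg : ι → ℤ} {d : ℤ} {x : ι →₀ S} :
    x ∈ freePiece k n dg d ↔ ∀ t, x t ∈ polyPiece k n (d - dg t) := by
  simp [freePiece]

lemma single_mem_freePiece {dg : ι → ℤ} {d : ℤ} (t : ι) {f : S}
    (hf : f ∈ polyPiece k n (d - dg t)) : single t f ∈ freePiece k n dg d := by
  rw [mem_freePiece_iff]
  intro t'
  rcases eq_or_ne t t' with rfl | h
  · simpa using hf
  · simp [h]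

lemma single_one_mem_freePiece (dg : ι → ℤ) (t : ι) :
    single t (1 : S) ∈ freePiece k n dg (dg t) :=
  single_mem_freePiece t (by simpa [mem_polyPiece_of_nonneg] using isHomogeneous_one (Fin n) k)

lemma smul_mem_freePiece {dg : ι → ℤ} {a d : ℤ} {f : S} {x : ι →₀ S}
    (hf : f ∈ polyPiece k n a) (hx : x ∈ freePiece k n dg d) :
    f • x ∈ freePiece k n dg (a + d) := by
  rw [mem_freePiece_iff] at hx ⊢
  intro t
  simpa [add_sub_assoc] using mul_mem_polyPiece hf (hx t)

lemma apply_eq_zero_of_mem_freePiece {dg : ι → ℤ} {d : ℤ} {x : ι →₀ S}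
    (hx : x ∈ freePiece k n dg d) {t : ι} (ht : d < dg t) : x t = 0 := by
  simpa [polyPiece_of_neg (sub_neg.2 ht)] using mem_freePiece_iff.1 hx t

def IsGradedOfDegree (dg : ι → ℤ) (dg' : κ → ℤ) (e : ℤ) (φ : (ι →₀ S) →ₗ[S] (κ →₀ S)) :
    Prop :=
  ∀ d x, x ∈ freePiece k n dg d → φ x ∈ freePiece k n dg' (d + e)

noncomputable def freeComponent (dg : ι → ℤ) (d : ℤ) : (ι →₀ S) →ₗ[k] (ι →₀ S) :=
  lsum k fun t => (lsingle t).comp (polyComponent (d - dg t))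

lemma freeComponent_apply (dg : ι → ℤ) (d : ℤ) (x : ι →₀ S) (t : ι) :
    freeComponent dg d x t = polyComponent (d - dg t) (x t) := by
  rw [freeComponent, lsum_apply, Finsupp.sum_apply, Finsupp.sum_eq_single t]
  · simp
  · intro t' _ ht'
    simp [ht']
  · simp

lemma freeComponent_mem (dg : ι → ℤ) (d : ℤ) (x : ι →₀ S) :
    freeComponent dg d x ∈ freePiece k n dg d :=
  mem_freePiece_iff.2 fun t => by
    rw [freeComponent_apply]
    exact polyComponent_mem _ _

lemma freeComponent_of_mem {dg : ι → ℤ} {d : ℤ} {x : ι →₀ S} (hx : x ∈ freePiece k n dg d)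
    (d' : ℤ) : freeComponent dg d' x = if d = d' then x else 0 := by
  ext t
  rw [freeComponent_apply, polyComponent_of_mem (mem_freePiece_iff.1 hx t)]
  by_cases h : d = d' <;> simp [h]

lemma freeComponent_map {dg : ι → ℤ} {dg' : κ → ℤ} {ψ : (ι →₀ S) →ₗ[S] (κ →₀ S)}
    (hψ : IsGradedOfDegree dg dg' 0 ψ) (d : ℤ) (x : ι →₀ S) :
    freeComponent dg' d (ψ x) = ψ (freeComponent dg d x) := by
  induction x using Finsupp.induction_linear with
  | zero => simp
  | add x y hx hy => simp only [map_add, hx, hy]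
  | single t c =>
    induction c using MvPolynomial.induction_on' with
    | monomial m a =>
      have hx : single t (monomial m a) ∈ freePiece k n dg (dg t + m.degree) :=
        single_mem_freePiece t (by simpa using monomial_mem_polyPiece m a)
      have hψx := hψ _ _ hx
      rw [add_zero] at hψx
      rw [freeComponent_of_mem hx, freeComponent_of_mem hψx, apply_ite ψ, map_zero]
    | add p q hp hq => simp only [single_add, map_add, hp, hq]

lemma exists_mem_freePiece_map_eq {dg : ι → ℤ} {dg' : κ → ℤ} {ψ : (ι →₀ S) →ₗ[S] (κ →₀ S)}
    (hψ : IsGradedOfDegree dg dg' 0 ψ) {d : ℤ} {y : κ →₀ S} (hy : y ∈ freePiece k n dg' d)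
    (hyψ : y ∈ LinearMap.range ψ) : ∃ x ∈ freePiece k n dg d, ψ x = y := by
  obtain ⟨x, rfl⟩ := hyψ
  refine ⟨freeComponent dg d x, freeComponent_mem dg d x, ?_⟩
  rw [← freeComponent_map hψ, freeComponent_of_mem hy, if_pos rfl]

lemma isGradedOfDegree_smul_id {dg : ι → ℤ} {e : ℤ} {f : S} (hf : f ∈ polyPiece k n e) :
    IsGradedOfDegree dg dg e (f • LinearMap.id : (ι →₀ S) →ₗ[S] (ι →₀ S)) := fun d x hx => by
  simpa [add_comm] using smul_mem_freePiece hf hx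

lemma IsGradedOfDegree.comp {dg : ι → ℤ} {dg' : κ → ℤ} {dg'' : ν → ℤ} {e e' : ℤ}
    {φ : (ι →₀ S) →ₗ[S] (κ →₀ S)} {ψ : (κ →₀ S) →ₗ[S] (ν →₀ S)}
    (hψ : IsGradedOfDegree dg' dg'' e' ψ) (hφ : IsGradedOfDegree dg dg' e φ) :
    IsGradedOfDegree dg dg'' (e + e') (ψ ∘ₗ φ) := fun d x hx => by
  simpa [add_assoc] using hψ _ _ (hφ d x hx)

lemma IsGradedOfDegree.sub {dg : ι → ℤ} {dg' : κ → ℤ} {e : ℤ}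
    {φ ψ : (ι →₀ S) →ₗ[S] (κ →₀ S)} (hφ : IsGradedOfDegree dg dg' e φ)
    (hψ : IsGradedOfDegree dg dg' e ψ) : IsGradedOfDegree dg dg' e (φ - ψ) := fun d x hx =>
  Submodule.sub_mem _ (hφ d x hx) (hψ d x hx)

lemma isGradedOfDegree_linearCombination {dg : ι → ℤ} {dg' : κ → ℤ} {e : ℤ}
    {v : ι → κ →₀ S} (hv : ∀ t, v t ∈ freePiece k n dg' (dg t + e)) :
    IsGradedOfDegree dg dg' e (linearCombination S v) := by
  intro d x hx
  rw [linearCombination_apply]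
  refine Submodule.sum_mem _ fun t _ => ?_
  convert smul_mem_freePiece (mem_freePiece_iff.1 hx t) (hv t) using 2
  ring

lemma IsGradedOfDegree.exists_lift {dg : ι → ℤ} {dg' : κ → ℤ} {dg'' : ν → ℤ} {e : ℤ}
    {ψ : (κ →₀ S) →ₗ[S] (ι →₀ S)} (hψ : IsGradedOfDegree dg' dg 0 ψ)
    {φ : (ν →₀ S) →ₗ[S] (ι →₀ S)} (hφ : IsGradedOfDegree dg'' dg e φ)
    (hφψ : LinearMap.range φ ≤ LinearMap.range ψ) :
    ∃ σ : (ν →₀ S) →ₗ[S] (κ →₀ S), IsGradedOfDegree dg'' dg' e σ ∧ ψ ∘ₗ σ = φ := by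
  have hv : ∀ t, ∃ v ∈ freePiece k n dg' (dg'' t + e), ψ v = φ (single t 1) := fun t =>
    exists_mem_freePiece_map_eq hψ (hφ _ _ (single_one_mem_freePiece dg'' t))
      (hφψ ⟨_, rfl⟩)
  choose v hv hψv using hv
  refine ⟨linearCombination S v, isGradedOfDegree_linearCombination hv, ?_⟩
  ext t : 2
  simp [hψv]

lemma IsGradedOfDegree.apply_eq_zero {dg : ι → ℤ} {dg' : κ → ℤ} {e : ℤ}
    {φ : (ι →₀ S) →ₗ[S] (κ →₀ S)} (hφ : IsGradedOfDegree dg dg' e φ) {u : κ}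
    (hu : ∀ t, dg t + e < dg' u) (x : ι →₀ S) : φ x u = 0 := by
  induction x using Finsupp.induction_linear with
  | zero => simp
  | add x y hx hy => simp [hx, hy]
  | single t c =>
    rw [← smul_single_one, map_smul, Finsupp.smul_apply,
      apply_eq_zero_of_mem_freePiece (hφ _ _ (single_one_mem_freePiece dg t)) (hu t), smul_zero]

end Grading

lemma Ideal.Quotient.smul_mk {A : Type*} [CommRing A] (I : Ideal A) (r g : A) :
    r • Ideal.Quotient.mk I g = Ideal.Quotient.mk I (r * g) := by
  rw [← Ideal.Quotient.mk_eq_mk, ← Ideal.Quotient.mk_eq_mk, ← Submodule.Quotient.mk_smul,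
    smul_eq_mul]

lemma mem_maxIdeal_iff {f : S} : f ∈ maxIdeal k n ↔ constantCoeff f = 0 := by
  have := mem_pow_idealOfVars_iff' 1 f
  simp only [pow_one, Nat.lt_one_iff, Finsupp.degree_eq_zero_iff] at this
  simp [maxIdeal, this, constantCoeff_eq]

lemma constantCoeff_apply_eq_zero_of_mem_maxIdeal_smul {ι : Type} {x : ι →₀ S}
    (hx : x ∈ maxIdeal k n • (⊤ : Submodule S (ι →₀ S))) (t : ι) :
    constantCoeff (x t) = 0 := by
  induction hx using Submodule.smul_induction_on' with
  | smul r hr y _ => simp [mem_maxIdeal_iff.1 hr]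
  | add y _ z _ hy hz => simp [hy, hz]

namespace MinFreeRes

section General

variable {M : Type} [AddCommGroup M] [Module (MvPolynomial (Fin n) k) M] [Module k M]
  [IsScalarTower k (MvPolynomial (Fin n) k) M]
  {piece : ℤ → Submodule k M} (R : MinFreeRes k n M piece)

lemma constantCoeff_eq_zero_of_mem_range_diff {i : ℕ} {x : R.ι i →₀ S}
    (hx : x ∈ LinearMap.range (R.diff i)) (t : R.ι i) : constantCoeff (x t) = 0 :=
  constantCoeff_apply_eq_zero_of_mem_maxIdeal_smul (R.minimal i hx) t

lemma constantCoeff_eq_zero_of_aug_eq_zero {x : R.ι 0 →₀ S} (hx : R.aug x = 0)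
    (t : R.ι 0) : constantCoeff (x t) = 0 :=
  R.constantCoeff_eq_zero_of_mem_range_diff (R.ker_aug ▸ hx) t

lemma diff_single_ne_zero {i : ℕ} (t : R.ι (i + 1)) : R.diff i (single t 1) ≠ 0 := by
  intro h
  have := R.constantCoeff_eq_zero_of_mem_range_diff
    (R.exact i ▸ LinearMap.mem_ker.2 h : single t (1 : S) ∈ _) t
  simp at this

lemma diff_diff (i : ℕ) (y : R.ι (i + 2) →₀ S) :
    R.diff i (R.diff (i + 1) y) = 0 :=
  (R.exact i).ge ⟨y, rfl⟩

lemma diff_injective {i : ℕ} (h : IsEmpty (R.ι (i + 2))) : Function.Injective (R.diff i) := by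
  rw [← LinearMap.ker_eq_bot, R.exact i, LinearMap.range_eq_bot]
  exact Subsingleton.elim _ _

lemma isGradedOfDegree_diff (i : ℕ) : IsGradedOfDegree (R.dg (i + 1)) (R.dg i) 0 (R.diff i) :=
  fun d x hx => by simpa using R.diff_graded i d x hx

theorem exists_homotopy {e : ℤ} {f : S} (hf : f ∈ polyPiece k n e)
    (hfM : ∀ m : M, f • m = 0) (i : ℕ) :
    ∃ σ : (R.ι i →₀ S) →ₗ[S] (R.ι (i + 1) →₀ _),
      IsGradedOfDegree (R.dg i) (R.dg (i + 1)) e σ ∧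
        R.diff i ∘ₗ σ ∘ₗ R.diff i = f • R.diff i := by
  induction i with
  | zero =>
    have hrange : LinearMap.range (f • LinearMap.id) ≤ LinearMap.range (R.diff 0) := by
      rintro _ ⟨y, rfl⟩
      simp [← R.ker_aug, hfM]
    obtain ⟨σ, hσ, hdiffσ⟩ :=
      (R.isGradedOfDegree_diff 0).exists_lift (isGradedOfDegree_smul_id hf) hrange
    refine ⟨σ, hσ, ?_⟩
    rw [← LinearMap.comp_assoc, hdiffσ, LinearMap.smul_comp, LinearMap.id_comp]
  | succ i ih =>
    obtain ⟨σ, hσ, hdiffσ⟩ := ih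
    let φ : (R.ι (i + 1) →₀ S) →ₗ[S] _ :=
      f • LinearMap.id - σ ∘ₗ R.diff i
    have hrange : LinearMap.range φ ≤ LinearMap.range (R.diff (i + 1)) := by
      rintro _ ⟨y, rfl⟩
      rw [← R.exact i, LinearMap.mem_ker]
      simpa [φ, sub_eq_zero] using (LinearMap.congr_fun hdiffσ y).symm
    have hφ : IsGradedOfDegree (R.dg (i + 1)) (R.dg (i + 1)) e φ :=
      (isGradedOfDegree_smul_id hf).sub (by simpa using hσ.comp (R.isGradedOfDegree_diff i))
    obtain ⟨σ', hσ', hdiffσ'⟩ := (R.isGradedOfDegree_diff (i + 1)).exists_lift hφ hrange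
    refine ⟨σ', hσ', ?_⟩
    rw [← LinearMap.comp_assoc, hdiffσ']
    refine LinearMap.ext fun y => ?_
    simp [φ, R.diff_diff]

lemma apply_diff_eq_smul {i : ℕ} (h : IsEmpty (R.ι (i + 2))) {f : S}
    {σ : (R.ι i →₀ S) →ₗ[S] (R.ι (i + 1) →₀ _)}
    (hσ : R.diff i ∘ₗ σ ∘ₗ R.diff i = f • R.diff i) (y : R.ι (i + 1) →₀ S) :
    σ (R.diff i y) = f • y :=
  R.diff_injective h (by simpa using LinearMap.congr_fun hσ y)

lemma T_le_iff {i : ℕ} {b : WithBot ℤ} : R.T i ≤ b ↔ ∀ s, (R.dg i s : WithBot ℤ) ≤ b := by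
  let := R.fin i
  simp [T]

lemma dg_le_T (i : ℕ) (s : R.ι i) : (R.dg i s : WithBot ℤ) ≤ R.T i :=
  R.T_le_iff.1 le_rfl s

end General

section Quotient

variable {I : Ideal (MvPolynomial (Fin n) k)}
  (R : MinFreeRes k n (MvPolynomial (Fin n) k ⧸ I) (quotPiece k n I))

lemma dg_zero_nonneg (t : R.ι 0) : 0 ≤ R.dg 0 t := by
  by_contra! h
  have hmem := R.aug_graded _ _ (single_one_mem_freePiece (R.dg 0) t)
  rw [quotPiece, polyPiece_of_neg h, Submodule.map_bot, Submodule.mem_bot] at hmem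
  simpa using R.constantCoeff_eq_zero_of_aug_eq_zero hmem t

/-- If `x` lifts `1 ∈ S/I`, then `e_t - g • x ∈ ker aug ⊆ 𝔪 F₀` for a suitable `g`, so the
constant term of `x t` is a unit while that of every other coordinate of `x` vanishes. -/
lemma subsingleton_ι_zero : Subsingleton (R.ι 0) := by
  obtain ⟨x, hx⟩ := R.aug_surjective (Ideal.Quotient.mk I 1)
  have key : ∀ t, ∃ g : S, constantCoeff g * constantCoeff (x t) = 1 ∧
      ∀ t' ≠ t, constantCoeff g * constantCoeff (x t') = 0 := by
    intro t
    obtain ⟨g, hg⟩ := Ideal.Quotient.mk_surjective (R.aug (single t 1))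
    have hker : R.aug (single t 1 - g • x) = 0 := by
      rw [map_sub, map_smul, hx, ← hg, Ideal.Quotient.smul_mk, mul_one, sub_self]
    have hcc := R.constantCoeff_eq_zero_of_aug_eq_zero hker
    refine ⟨g, ?_, fun t' ht' => ?_⟩
    · have h := hcc t
      simp at h
      linear_combination -h
    · simpa [single_apply, Ne.symm ht'] using hcc t'
  refine ⟨fun t t' => by_contra fun hne => ?_⟩
  obtain ⟨g, hg, -⟩ := key t
  obtain ⟨g', hg', hg'0⟩ := key t'
  rcases mul_eq_zero.1 (hg'0 t hne) with h | h <;> simp [h] at hg hg'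

lemma exists_mem_polyPiece_mem_ne_zero (u : R.ι 1) :
    ∃ e ≤ R.dg 1 u, ∃ f ∈ polyPiece k n e, f ∈ I ∧ f ≠ 0 := by
  have := R.subsingleton_ι_zero
  set w := R.diff 0 (single u 1)
  obtain ⟨t, ht⟩ := Finsupp.support_nonempty_iff.2 (R.diff_single_ne_zero u)
  have eq_single : ∀ y : R.ι 0 →₀ S, y = single t (y t) := fun y => by
    ext t'
    rw [Subsingleton.elim t' t, single_eq_same]
  refine ⟨R.dg 1 u - R.dg 0 t, by linarith [R.dg_zero_nonneg t], w t,
    mem_freePiece_iff.1 (R.diff_graded 0 _ _ (single_one_mem_freePiece _ u)) t, ?_,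
    mem_support_iff.1 ht⟩
  obtain ⟨x, hx⟩ := R.aug_surjective (Ideal.Quotient.mk I 1)
  have hw : R.aug w = 0 := R.ker_aug.ge ⟨_, rfl⟩
  have hwx : w t • x = x t • w := by
    rw [eq_single x, eq_single w, smul_single, smul_single, single_eq_same, single_eq_same,
      smul_eq_mul, smul_eq_mul, mul_comm]
  rw [← Ideal.Quotient.eq_zero_iff_mem, ← mul_one (w t), ← Ideal.Quotient.smul_mk, ← hx,
    ← map_smul, hwx, map_smul, hw, smul_zero]

end Quotient

end MinFreeRes

theorem stmt7_general (k : Type) [Field k] (n : ℕ)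
    (I : Ideal (MvPolynomial (Fin n) k))
    (RI : MinFreeRes k n (MvPolynomial (Fin n) k ⧸ I) (quotPiece k n I))
    (p : ℕ) (hp : RI.lengthEq p)
    (t1 : ℤ) (ht1 : IsLeast (Set.range (RI.dg 1)) t1) :
    RI.T p ≤ RI.T (p - 1) + (t1 : WithBot ℤ) := by
  obtain ⟨u1, rfl⟩ := ht1.1
  obtain ⟨q, rfl⟩ : ∃ q, p = q + 1 :=
    Nat.exists_eq_succ_of_ne_zero fun h => (hp.2 1 (by omega)).elim u1
  obtain ⟨e, he, f, hf, hfI, hf0⟩ := RI.exists_mem_polyPiece_mem_ne_zero u1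
  have hfM : ∀ m : MvPolynomial (Fin n) k ⧸ I, f • m = 0 := fun m => by
    obtain ⟨g, rfl⟩ := Ideal.Quotient.mk_surjective m
    rw [Ideal.Quotient.smul_mk, Ideal.Quotient.eq_zero_iff_mem]
    exact I.mul_mem_right g hfI
  obtain ⟨σ, hσ, hσdiff⟩ := RI.exists_homotopy hf hfM q
  refine RI.T_le_iff.2 fun u => ?_
  by_contra hlt
  have hu : ∀ s, RI.dg q s + e < RI.dg (q + 1) u := fun s => by
    have : ((RI.dg q s + e : ℤ) : WithBot ℤ) ≤ RI.T q + (RI.dg 1 u1 : WithBot ℤ) := by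
      rw [WithBot.coe_add]
      exact add_le_add (RI.dg_le_T q s) (WithBot.coe_le_coe.2 he)
    exact WithBot.coe_lt_coe.1 (this.trans_lt (not_le.1 hlt))
  apply hf0
  simpa [RI.apply_diff_eq_smul (hp.2 (q + 2) (by omega)) hσdiff] using
    hσ.apply_eq_zero hu (RI.diff q (single u 1))

/-- For a nonzero homogeneous ideal `I` of `S` with `p = pd (S/I)`,
`T_p(S/I) ≤ T_{p-1}(S/I) + t_1(S/I)`, where `t_1(S/I)` is the minimal degree of a
minimal generator of `I` (i.e. the least degree occurring in the first step of
the minimal graded free resolution of `S/I`). -/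
theorem stmt7 (k : Type) [Field k] (n : ℕ)
    (I : Ideal (MvPolynomial (Fin n) k)) (hI0 : I ≠ ⊥)
    (hIhom : IsHomogeneousIdeal k n I)
    (RI : MinFreeRes k n (MvPolynomial (Fin n) k ⧸ I) (quotPiece k n I))
    (p : ℕ) (hp : RI.lengthEq p)
    (t1 : ℤ) (ht1 : IsLeast (Set.range (RI.dg 1)) t1) :
    RI.T p ≤ RI.T (p - 1) + (t1 : WithBot ℤ) :=
  stmt7_general k n I RI p hp t1 ht1
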